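/- arXiv:1803.06902 — 5 statements merged into one kernel-verified Lean document; each statement's English description precedes it below -/
import Mathlib

section
/- Let Ξ = Θ₁ Σ Θ₂ be a Smith factorization of Ξ ∈ ℤ^{s×s} with Σ = diag(σ₁,…,σ_s) and Θ₁, Θ₂ unimodular. Let h = h₁ ⊗ ⋯ ⊗ h_s be the tensor product of finitely supported univariate masks h_j each satisfying the univariate QMF equation ∑_{k∈ℤ} h_j(k) h_j(k − σ_j m) = |σ_j| δ(m) for all m ∈ ℤ. Then the mask a := h(Θ₁^{-1} ·) satisfies the multivariate QMF equation ∑_{α∈ℤ^s} a(α) a(α − Ξγ) = |det Ξ| δ(γ) for all γ ∈ ℤ^s. -/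
/-!
Substituting `α = Θ₁ β` turns `a` into the tensor product `β ↦ ∏ⱼ hⱼ(βⱼ)`, and since
`Θ₁⁻¹ Ξ = Σ Θ₂` the shift `Ξ γ` becomes the diagonal shift `Σ m` with `m = Θ₂ γ`. The
multivariate sum of a tensor product then factors into the univariate QMF sums, which give
`∏ⱼ |σⱼ| δ(mⱼ) = |det Ξ| δ(m)`, and `m = 0` exactly when `γ = 0` because `Θ₂` is unimodular.
-/

open Finset Function Matrix

theorem finsum_prod_apply_eq_prod_finsum {ι α R : Type*} [Fintype ι] [CommSemiring R]
    {F : ι → α → R} (hF : ∀ i, (support (F i)).Finite) :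
    ∑ᶠ x : ι → α, ∏ i, F i (x i) = ∏ i, ∑ᶠ a, F i a := by
  classical
  calc ∑ᶠ x : ι → α, ∏ i, F i (x i)
      = ∑ x ∈ Fintype.piFinset fun i => (hF i).toFinset, ∏ i, F i (x i) := by
        refine finsum_eq_sum_of_support_subset _ fun x hx => ?_
        simp only [mem_coe, Fintype.mem_piFinset, Set.Finite.mem_toFinset,
          mem_support]
        exact fun i hi => hx (prod_eq_zero (mem_univ i) hi)
    _ = ∏ i, ∑ a ∈ (hF i).toFinset, F i a := (prod_univ_sum _ _).symm
    _ = ∏ i, ∑ᶠ a, F i a :=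
        prod_congr rfl fun i _ =>
          (finsum_eq_sum_of_support_subset _ (by simp)).symm

theorem Matrix.finsum_comp_mulVec {n R M : Type*} [Fintype n] [DecidableEq n] [CommRing R]
    [AddCommMonoid M] {A B : Matrix n n R} (hBA : B * A = 1) (f : (n → R) → M) :
    ∑ᶠ x, f (A *ᵥ x) = ∑ᶠ x, f x :=
  finsum_comp_equiv (A.toLinearEquiv' (invertibleOfLeftInverse A B hBA)).toEquiv

theorem finsum_tensor_mul_shift_diagonal {ι R : Type*} [Fintype ι] [DecidableEq ι]
    [CommRing R] {σ : ι → ℤ} {h : ι → ℤ → R} {c : ι → R}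
    (hfin : ∀ i, (support (h i)).Finite)
    (hQMF : ∀ i m, ∑ᶠ k, h i k * h i (k - σ i * m) = c i * if m = 0 then 1 else 0)
    (m : ι → ℤ) :
    ∑ᶠ β : ι → ℤ, (∏ i, h i (β i)) * ∏ i, h i ((β - diagonal σ *ᵥ m) i) =
      (∏ i, c i) * if m = 0 then 1 else 0 := by
  simp only [Pi.sub_apply, mulVec_diagonal, ← prod_mul_distrib]
  rw [finsum_prod_apply_eq_prod_finsum (F := fun i k => h i k * h i (k - σ i * m i))
    fun i => (hfin i).subset (support_mul_subset_left _ _)]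
  simp only [hQMF, prod_mul_distrib, prod_boole, mem_univ, true_implies, funext_iff,
    Pi.zero_apply]

theorem abs_det_eq_prod_abs_of_smith {n : Type*} [Fintype n] [DecidableEq n]
    {Ξ Θ₁ Θ₂ : Matrix n n ℤ} {σ : n → ℤ} (hSmith : Ξ = Θ₁ * diagonal σ * Θ₂)
    (hΘ₁ : |Θ₁.det| = 1) (hΘ₂ : |Θ₂.det| = 1) :
    |Ξ.det| = ∏ i, |σ i| := by
  rw [hSmith, det_mul, det_mul, det_diagonal, abs_mul, abs_mul, hΘ₁, hΘ₂, abs_prod, one_mul,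
    mul_one]

/-- Let `Ξ = Θ₁ Σ Θ₂` be a Smith factorization with `Σ = diag(σ₁,…,σ_s)` and
`Θ₁, Θ₂` unimodular (with integer inverses), and let `h = h₁ ⊗ ⋯ ⊗ h_s` be a
tensor product of finitely supported univariate masks each satisfying the
univariate QMF equation with scaling factor `σ_j`. Then `a := h(Θ₁^{-1}·)`
satisfies the multivariate QMF equation with dilation `Ξ`. -/
theorem tensor_mask_satisfies_QMF
    {s : ℕ} (Ξ Θ₁ Θ₂ Θ₁inv : Matrix (Fin s) (Fin s) ℤ)
    (σ : Fin s → ℤ) (h : Fin s → ℤ → ℝ)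
    -- Smith factorization
    (hSmith : Ξ = Θ₁ * Matrix.diagonal σ * Θ₂)
    (hΘ₁ : |Θ₁.det| = 1) (hΘ₂ : |Θ₂.det| = 1)
    (hΘ₁inv : Θ₁ * Θ₁inv = 1 ∧ Θ₁inv * Θ₁ = 1)
    -- the univariate masks are finitely supported
    (hfin : ∀ j, (Function.support (h j)).Finite)
    -- univariate QMF equations
    (hQMF : ∀ j : Fin s, ∀ m : ℤ,
      ∑ᶠ k : ℤ, h j k * h j (k - σ j * m) =
        |(σ j : ℝ)| * (if m = 0 then (1 : ℝ) else 0))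
    -- a := h(Θ₁^{-1}·), with h the tensor product of the h_j
    (a : (Fin s → ℤ) → ℝ)
    (ha : ∀ α : Fin s → ℤ, a α = ∏ j : Fin s, h j (Θ₁inv.mulVec α j)) :
    ∀ γ : Fin s → ℤ,
      ∑ᶠ α : Fin s → ℤ, a α * a (α - Ξ.mulVec γ) =
        |(Ξ.det : ℝ)| * (if γ = 0 then (1 : ℝ) else 0) := by
  intro γ
  have hleft : ∀ β, Θ₁inv *ᵥ Θ₁ *ᵥ β = β := fun β => by
    rw [mulVec_mulVec, hΘ₁inv.2, one_mulVec]
  have hshift : ∀ β, Θ₁inv *ᵥ (Θ₁ *ᵥ β - Ξ *ᵥ γ) = β - diagonal σ *ᵥ Θ₂ *ᵥ γ := fun β => by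
    rw [mulVec_sub, hleft, hSmith, mul_assoc, ← mulVec_mulVec, hleft, mulVec_mulVec]
  have hΘ₂inj : Injective Θ₂.mulVec := mulVec_injective_of_isUnit <|
    (isUnit_iff_isUnit_det Θ₂).2 (Int.isUnit_iff_abs_eq.2 hΘ₂)
  rw [← finsum_comp_mulVec hΘ₁inv.2]
  simp only [ha, hshift, hleft]
  rw [finsum_tensor_mul_shift_diagonal hfin hQMF, ← Int.cast_abs,
    abs_det_eq_prod_abs_of_smith hSmith hΘ₁ hΘ₂]
  simp only [hΘ₂inj.eq_iff' (mulVec_zero Θ₂), Int.cast_prod, Int.cast_abs]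
end

section
/- Let Ξ = Θ₁ Σ Θ₂ with Θ₁, Θ₂ unimodular and a = h(Θ₁^{-1}·). Then the subdivision operators satisfy the factorization S_{Ξ,a} = D_{Θ₁^{-1}} ∘ S_{Σ,h} ∘ D_{Θ₂^{-1}}, where D_Θ c := c(Θ·) is the dilation operator, and consequently S_{Ξ,a}^r = D_{Θ₁^{-1}} ∘ (S_{ΣΛ,h})^r ∘ D_{Θ₁} for all r ∈ ℕ, where Λ := Θ₂Θ₁. -/
/-- The subdivision operator `S_{Ξ,a} c = ∑_α a(·−Ξα) c(α)`. -/
noncomputable def subdivOp {s : ℕ} (Ξ : Matrix (Fin s) (Fin s) ℤ)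
    (a : (Fin s → ℤ) → ℝ) (c : (Fin s → ℤ) → ℝ) : (Fin s → ℤ) → ℝ :=
  fun β => ∑ᶠ α : Fin s → ℤ, a (β - Ξ.mulVec α) * c α

/-- The dilation operator `D_Θ c = c(Θ·)`. -/
def dilOp {s : ℕ} (Θ : Matrix (Fin s) (Fin s) ℤ)
    (c : (Fin s → ℤ) → ℝ) : (Fin s → ℤ) → ℝ :=
  fun β => c (Θ.mulVec β)


lemma dil_comp {s : ℕ} (A B : Matrix (Fin s) (Fin s) ℤ) :
    dilOp A ∘ dilOp B = dilOp (B * A) := by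
  funext c β
  simp [dilOp, Matrix.mulVec_mulVec]

lemma subdiv_dil {s : ℕ} (M L Linv : Matrix (Fin s) (Fin s) ℤ)
    (h1 : L * Linv = 1) (h2 : Linv * L = 1) (h : (Fin s → ℤ) → ℝ) :
    subdivOp M h ∘ dilOp Linv = subdivOp (M * L) h := by
  have hbij : Function.Bijective (L.mulVec : (Fin s → ℤ) → (Fin s → ℤ)) :=
    Equiv.bijective
      ⟨L.mulVec, Linv.mulVec,
        fun v => by simp [Matrix.mulVec_mulVec, h2, Matrix.one_mulVec],
        fun v => by simp [Matrix.mulVec_mulVec, h1, Matrix.one_mulVec]⟩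
  funext c β
  show ∑ᶠ α, h (β - M.mulVec α) * c (Linv.mulVec α)
      = ∑ᶠ α, h (β - (M * L).mulVec α) * c α
  rw [← finsum_comp (L.mulVec) hbij]
  simp only [Matrix.mulVec_mulVec, h2, Matrix.one_mulVec]

/-- For a Smith factorization `Ξ = Θ₁ Σ Θ₂` and `a = h(Θ₁^{-1}·)`, the subdivision
operators factor as `S_{Ξ,a} = D_{Θ₁^{-1}} ∘ S_{Σ,h} ∘ D_{Θ₂^{-1}}`, and
consequently `S_{Ξ,a}^r = D_{Θ₁^{-1}} ∘ (S_{ΣΛ,h})^r ∘ D_{Θ₁}` with `Λ = Θ₂Θ₁`. -/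
theorem subdivision_operator_factorization
    {s : ℕ} (Ξ Θ₁ Θ₂ Θ₁inv Θ₂inv : Matrix (Fin s) (Fin s) ℤ)
    (σ : Fin s → ℤ) (h a : (Fin s → ℤ) → ℝ)
    (hσ : ∀ j, σ j ≠ 0)
    (hSmith : Ξ = Θ₁ * Matrix.diagonal σ * Θ₂)
    (hΘ₁inv : Θ₁ * Θ₁inv = 1 ∧ Θ₁inv * Θ₁ = 1)
    (hΘ₂inv : Θ₂ * Θ₂inv = 1 ∧ Θ₂inv * Θ₂ = 1)
    (hfin : (Function.support h).Finite)
    (ha : ∀ α, a α = h (Θ₁inv.mulVec α)) :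
    subdivOp Ξ a = dilOp Θ₁inv ∘ subdivOp (Matrix.diagonal σ) h ∘ dilOp Θ₂inv ∧
    ∀ r : ℕ, (subdivOp Ξ a)^[r] =
      dilOp Θ₁inv ∘ (subdivOp (Matrix.diagonal σ * (Θ₂ * Θ₁)) h)^[r] ∘ dilOp Θ₁ := by
  obtain ⟨h11, h12⟩ := hΘ₁inv
  obtain ⟨h21, h22⟩ := hΘ₂inv
  have hbase : subdivOp Ξ a = dilOp Θ₁inv ∘ subdivOp (Matrix.diagonal σ * Θ₂) h := by
    funext c β
    simp only [subdivOp, dilOp, Function.comp_apply]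
    refine finsum_congr fun α => ?_
    rw [ha]
    congr 1
    have h3 : Θ₁inv.mulVec (Ξ.mulVec α) = (Matrix.diagonal σ * Θ₂).mulVec α := by
      rw [Matrix.mulVec_mulVec, hSmith, ← mul_assoc, ← mul_assoc, h12, one_mul]
    rw [Matrix.mulVec_sub, h3]
  have key : subdivOp Ξ a ∘ dilOp Θ₁inv
      = dilOp Θ₁inv ∘ subdivOp (Matrix.diagonal σ * (Θ₂ * Θ₁)) h := by
    have h2' : subdivOp (Matrix.diagonal σ * Θ₂) h ∘ dilOp Θ₁inv
        = subdivOp (Matrix.diagonal σ * (Θ₂ * Θ₁)) h := by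
      rw [subdiv_dil _ Θ₁ Θ₁inv h11 h12, mul_assoc]
    rw [hbase, ← h2']
    rfl
  constructor
  · rw [hbase, ← subdiv_dil (Matrix.diagonal σ) Θ₂ Θ₂inv h21 h22]
  · intro r
    induction r with
    | zero =>
      funext c β
      simp [dilOp, Matrix.mulVec_mulVec, h11]
    | succ r ih =>
      rw [Function.iterate_succ', Function.iterate_succ', ih]
      calc subdivOp Ξ a ∘ (dilOp Θ₁inv ∘ (subdivOp (Matrix.diagonal σ * (Θ₂ * Θ₁)) h)^[r] ∘ dilOp Θ₁)
          = (subdivOp Ξ a ∘ dilOp Θ₁inv) ∘ ((subdivOp (Matrix.diagonal σ * (Θ₂ * Θ₁)) h)^[r] ∘ dilOp Θ₁) := rfl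
        _ = (dilOp Θ₁inv ∘ subdivOp (Matrix.diagonal σ * (Θ₂ * Θ₁)) h) ∘ ((subdivOp (Matrix.diagonal σ * (Θ₂ * Θ₁)) h)^[r] ∘ dilOp Θ₁) := by rw [key]
        _ = dilOp Θ₁inv ∘ (subdivOp (Matrix.diagonal σ * (Θ₂ * Θ₁)) h ∘ (subdivOp (Matrix.diagonal σ * (Θ₂ * Θ₁)) h)^[r]) ∘ dilOp Θ₁ := rfl
end

section
/- Let Ξ = Θ₁ Σ Θ₂, a = h(Θ₁^{-1}·), Λ = Θ₂Θ₁. The subdivision scheme S_{Ξ,a} converges uniformly if and only if S_{ΣΛ,h} converges uniformly; moreover, φ̃ := φ(Θ₁·) is a basic limit function for S_{ΣΛ,h} if φ is one for S_{Ξ,a}, and conversely. -/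
/-- The pulse sequence δ. -/
def pulse {s : ℕ} : (Fin s → ℤ) → ℝ := fun α => if α = 0 then 1 else 0

/-- `f` is the limit of the subdivision scheme `S_{Ξ,a}` for initial data `c`:
`f` is uniformly continuous and
`sup_α |f(Ξ^{-r}α) − S_{Ξ,a}^r c(α)| → 0` as `r → ∞`. -/
def IsSubdivLimit {s : ℕ} (Ξ : Matrix (Fin s) (Fin s) ℤ)
    (a : (Fin s → ℤ) → ℝ) (c : (Fin s → ℤ) → ℝ) (f : (Fin s → ℝ) → ℝ) : Prop :=
  UniformContinuous f ∧
    ∀ ε > (0 : ℝ), ∃ R : ℕ, ∀ r ≥ R, ∀ α : Fin s → ℤ,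
      |f ((((Ξ.map (Int.cast : ℤ → ℝ)))⁻¹ ^ r).mulVec fun i => (α i : ℝ)) -
        (subdivOp Ξ a)^[r] c α| < ε

/-- Uniform convergence of the subdivision scheme `S_{Ξ,a}`: every bounded
sequence has a uniformly continuous limit function, and the scheme is
nontrivial. -/
def SubdivConverges {s : ℕ} (Ξ : Matrix (Fin s) (Fin s) ℤ)
    (a : (Fin s → ℤ) → ℝ) : Prop :=
  (∀ c : (Fin s → ℤ) → ℝ, (∃ M : ℝ, ∀ α, |c α| ≤ M) →
      ∃ f : (Fin s → ℝ) → ℝ, IsSubdivLimit Ξ a c f) ∧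
  ∃ c : (Fin s → ℤ) → ℝ, (∃ M : ℝ, ∀ α, |c α| ≤ M) ∧
      ∃ f : (Fin s → ℝ) → ℝ, IsSubdivLimit Ξ a c f ∧ f ≠ 0

section Aux
variable {s : ℕ}

private lemma bij_mulVec (P Q : Matrix (Fin s) (Fin s) ℤ) (hPQ : P * Q = 1) (hQP : Q * P = 1) :
    Function.Bijective (fun α : Fin s → ℤ => P.mulVec α) := by
  constructor
  · intro x y hxy
    have := congrArg Q.mulVec hxy
    simpa [Matrix.mulVec_mulVec, hQP, Matrix.one_mulVec] using this
  · intro y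
    exact ⟨Q.mulVec y, by simp [Matrix.mulVec_mulVec, hPQ, Matrix.one_mulVec]⟩

private lemma subdivOp_conj (Ξ Ξ' P Q : Matrix (Fin s) (Fin s) ℤ)
    (a b : (Fin s → ℤ) → ℝ) (hPQ : P * Q = 1) (hQP : Q * P = 1)
    (hconj : Ξ * P = P * Ξ') (hab : ∀ α, b α = a (P.mulVec α))
    (c : (Fin s → ℤ) → ℝ) :
    subdivOp Ξ' b (fun α => c (P.mulVec α)) = fun β => subdivOp Ξ a c (P.mulVec β) := by
  funext β
  unfold subdivOp
  refine finsum_eq_of_bijective (fun α => P.mulVec α) (bij_mulVec P Q hPQ hQP) ?_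
  intro x
  simp only [hab]
  congr 2
  rw [Matrix.mulVec_sub, Matrix.mulVec_mulVec, ← hconj, ← Matrix.mulVec_mulVec]

private lemma subdivOp_conj_iter (Ξ Ξ' P Q : Matrix (Fin s) (Fin s) ℤ)
    (a b : (Fin s → ℤ) → ℝ) (hPQ : P * Q = 1) (hQP : Q * P = 1)
    (hconj : Ξ * P = P * Ξ') (hab : ∀ α, b α = a (P.mulVec α))
    (c : (Fin s → ℤ) → ℝ) (r : ℕ) :
    (subdivOp Ξ' b)^[r] (fun α => c (P.mulVec α))
      = fun β => (subdivOp Ξ a)^[r] c (P.mulVec β) := by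
  induction r with
  | zero => rfl
  | succ r ih =>
    rw [Function.iterate_succ_apply', ih,
      subdivOp_conj Ξ Ξ' P Q a b hPQ hQP hconj hab ((subdivOp Ξ a)^[r] c),
      Function.iterate_succ_apply']

private lemma map_mul_cast (P Q : Matrix (Fin s) (Fin s) ℤ) :
    (P * Q).map (Int.cast : ℤ → ℝ) = P.map Int.cast * Q.map Int.cast :=
  Matrix.map_mul (f := Int.castRingHom ℝ)

private lemma inv_pow_conj (Ξ Ξ' P Q : Matrix (Fin s) (Fin s) ℤ)
    (hPQ : P * Q = 1) (hQP : Q * P = 1) (hconj : Ξ * P = P * Ξ') (r : ℕ) :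
    ((Ξ.map (Int.cast : ℤ → ℝ))⁻¹ ^ r) * P.map Int.cast
      = P.map Int.cast * ((Ξ'.map (Int.cast : ℤ → ℝ))⁻¹ ^ r) := by
  set A := P.map (Int.cast : ℤ → ℝ) with hA
  set B := Q.map (Int.cast : ℤ → ℝ) with hB
  set M := Ξ.map (Int.cast : ℤ → ℝ) with hM
  set M' := Ξ'.map (Int.cast : ℤ → ℝ) with hM'
  have hAB : A * B = 1 := by
    rw [hA, hB, ← map_mul_cast, hPQ]; simp
  have hBA : B * A = 1 := by
    rw [hA, hB, ← map_mul_cast, hQP]; simp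
  have hAi : A⁻¹ = B := Matrix.inv_eq_right_inv hAB
  have hBi : B⁻¹ = A := Matrix.inv_eq_right_inv hBA
  have haux : ∀ X : Matrix (Fin s) (Fin s) ℝ, A * (B * X) = X := fun X => by
    rw [← mul_assoc, hAB, one_mul]
  have hbux : ∀ X : Matrix (Fin s) (Fin s) ℝ, B * (A * X) = X := fun X => by
    rw [← mul_assoc, hBA, one_mul]
  have hconjR : M * A = A * M' := by
    rw [hA, hM, hM', ← map_mul_cast, ← map_mul_cast, hconj]
  have hM'eq : M' = B * M * A := by
    rw [mul_assoc, hconjR, hbux]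
  have hinv : M'⁻¹ = B * M⁻¹ * A := by
    rw [hM'eq, Matrix.mul_inv_rev, Matrix.mul_inv_rev, hAi, hBi, mul_assoc]
  have hpow : M'⁻¹ ^ r = B * M⁻¹ ^ r * A := by
    induction r with
    | zero => simp [hBA]
    | succ n ih =>
      rw [pow_succ, ih, hinv, pow_succ]
      simp only [mul_assoc, haux]
  rw [hpow]
  simp only [mul_assoc, haux]

private lemma cast_mulVec (P : Matrix (Fin s) (Fin s) ℤ) (α : Fin s → ℤ) :
    (fun i => ((P.mulVec α) i : ℝ)) = (P.map (Int.cast : ℤ → ℝ)).mulVec (fun i => (α i : ℝ)) := by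
  funext i
  exact RingHom.map_mulVec (Int.castRingHom ℝ) P α i

private lemma uc_mulVec (A : Matrix (Fin s) (Fin s) ℝ) : UniformContinuous A.mulVec := by
  have := (LinearMap.toContinuousLinearMap A.mulVecLin).uniformContinuous
  exact this

end Aux

section Aux2
variable {s : ℕ}

private lemma limit_conj (Ξ Ξ' P Q : Matrix (Fin s) (Fin s) ℤ)
    (a b : (Fin s → ℤ) → ℝ) (hPQ : P * Q = 1) (hQP : Q * P = 1)
    (hconj : Ξ * P = P * Ξ') (hab : ∀ α, b α = a (P.mulVec α))
    (c : (Fin s → ℤ) → ℝ) (f : (Fin s → ℝ) → ℝ)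
    (hf : IsSubdivLimit Ξ a c f) :
    IsSubdivLimit Ξ' b (fun α => c (P.mulVec α))
      (fun x => f ((P.map (Int.cast : ℤ → ℝ)).mulVec x)) := by
  obtain ⟨hfu, hfl⟩ := hf
  refine ⟨hfu.comp (uc_mulVec _), ?_⟩
  intro ε hε
  obtain ⟨R, hR⟩ := hfl ε hε
  refine ⟨R, fun r hr α => ?_⟩
  have h1 : (P.map (Int.cast : ℤ → ℝ)).mulVec
        ((((Ξ'.map (Int.cast : ℤ → ℝ))⁻¹ ^ r)).mulVec fun i => (α i : ℝ))
      = ((Ξ.map (Int.cast : ℤ → ℝ))⁻¹ ^ r).mulVec fun i => ((P.mulVec α) i : ℝ) := by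
    rw [Matrix.mulVec_mulVec, cast_mulVec, Matrix.mulVec_mulVec,
      inv_pow_conj Ξ Ξ' P Q hPQ hQP hconj r]
  have h2 := congrFun (subdivOp_conj_iter Ξ Ξ' P Q a b hPQ hQP hconj hab c r) α
  simp only [h2, h1]
  exact hR r hr (P.mulVec α)

private lemma conv_conj (Ξ Ξ' P Q : Matrix (Fin s) (Fin s) ℤ)
    (a b : (Fin s → ℤ) → ℝ) (hPQ : P * Q = 1) (hQP : Q * P = 1)
    (hconj : Ξ * P = P * Ξ') (hab : ∀ α, b α = a (P.mulVec α))
    (hc : SubdivConverges Ξ a) : SubdivConverges Ξ' b := by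
  obtain ⟨h1, c₀, ⟨M₀, hM₀⟩, f₀, hf₀, hf₀ne⟩ := hc
  constructor
  · rintro c ⟨M, hM⟩
    obtain ⟨f, hf⟩ := h1 (fun α => c (Q.mulVec α)) ⟨M, fun α => hM _⟩
    refine ⟨fun x => f ((P.map (Int.cast : ℤ → ℝ)).mulVec x), ?_⟩
    have := limit_conj Ξ Ξ' P Q a b hPQ hQP hconj hab _ f hf
    simpa [Matrix.mulVec_mulVec, hQP, Matrix.one_mulVec] using this
  · refine ⟨fun α => c₀ (P.mulVec α), ⟨M₀, fun α => hM₀ _⟩,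
      fun x => f₀ ((P.map (Int.cast : ℤ → ℝ)).mulVec x),
      limit_conj Ξ Ξ' P Q a b hPQ hQP hconj hab c₀ f₀ hf₀, ?_⟩
    intro hzero
    apply hf₀ne
    funext y
    have hy : (P.map (Int.cast : ℤ → ℝ)).mulVec ((Q.map (Int.cast : ℤ → ℝ)).mulVec y) = y := by
      rw [Matrix.mulVec_mulVec, ← map_mul_cast, hPQ]
      simp
    have := congrFun hzero ((Q.map (Int.cast : ℤ → ℝ)).mulVec y)
    simp only [hy] at this
    simpa using this

end Aux2


private lemma pulse_comp {s : ℕ} (P Q : Matrix (Fin s) (Fin s) ℤ)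
    (hPQ : P * Q = 1) (hQP : Q * P = 1) :
    (fun α : Fin s → ℤ => pulse (P.mulVec α)) = pulse := by
  funext α
  unfold pulse
  by_cases hα : α = 0
  · simp [hα, Matrix.mulVec_zero]
  · have hne : P.mulVec α ≠ 0 := fun hz =>
      hα ((bij_mulVec P Q hPQ hQP).injective (by simpa [Matrix.mulVec_zero] using hz))
    simp [hα, hne]

/-- For a Smith factorization `Ξ = Θ₁ Σ Θ₂`, `a = h(Θ₁^{-1}·)` and `Λ = Θ₂Θ₁`,
the scheme `S_{Ξ,a}` converges iff `S_{ΣΛ,h}` converges; moreover `φ` is a basic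
limit function of `S_{Ξ,a}` iff `φ(Θ₁·)` is one of `S_{ΣΛ,h}`. -/
theorem subdivision_convergence_equivalence
    {s : ℕ} (Ξ Θ₁ Θ₂ Θ₁inv Θ₂inv : Matrix (Fin s) (Fin s) ℤ)
    (σ : Fin s → ℤ) (h a : (Fin s → ℤ) → ℝ)
    (hSmith : Ξ = Θ₁ * Matrix.diagonal σ * Θ₂)
    (hΘ₁inv : Θ₁ * Θ₁inv = 1 ∧ Θ₁inv * Θ₁ = 1)
    (hΘ₂inv : Θ₂ * Θ₂inv = 1 ∧ Θ₂inv * Θ₂ = 1)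
    -- Ξ is expansive
    (hΞ : ∀ μ : ℂ, (Ξ.map (Int.cast : ℤ → ℂ)).charpoly.IsRoot μ → 1 < ‖μ‖)
    (hfin : (Function.support h).Finite)
    (ha : ∀ α, a α = h (Θ₁inv.mulVec α)) :
    (SubdivConverges Ξ a ↔ SubdivConverges (Matrix.diagonal σ * (Θ₂ * Θ₁)) h) ∧
    (∀ φ : (Fin s → ℝ) → ℝ,
      IsSubdivLimit Ξ a pulse φ ↔
      IsSubdivLimit (Matrix.diagonal σ * (Θ₂ * Θ₁)) h pulse
        (fun x => φ ((Θ₁.map (Int.cast : ℤ → ℝ)).mulVec x))) := by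
  set Ξ' := Matrix.diagonal σ * (Θ₂ * Θ₁) with hΞ'
  have hconj1 : Ξ * Θ₁ = Θ₁ * Ξ' := by
    rw [hSmith, hΞ']
    simp only [mul_assoc]
  have hconj2 : Ξ' * Θ₁inv = Θ₁inv * Ξ := by
    rw [hSmith, hΞ']
    calc Matrix.diagonal σ * (Θ₂ * Θ₁) * Θ₁inv
        = Matrix.diagonal σ * (Θ₂ * (Θ₁ * Θ₁inv)) := by simp only [mul_assoc]
      _ = Matrix.diagonal σ * Θ₂ := by rw [hΘ₁inv.1, mul_one]
      _ = Θ₁inv * Θ₁ * (Matrix.diagonal σ * Θ₂) := by rw [hΘ₁inv.2, one_mul]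
      _ = Θ₁inv * (Θ₁ * Matrix.diagonal σ * Θ₂) := by simp only [mul_assoc]
  have hab1 : ∀ α, h α = a (Θ₁.mulVec α) := by
    intro α
    rw [ha, Matrix.mulVec_mulVec, hΘ₁inv.2, Matrix.one_mulVec]
  refine ⟨⟨fun hc => conv_conj Ξ Ξ' Θ₁ Θ₁inv a h hΘ₁inv.1 hΘ₁inv.2 hconj1 hab1 hc,
    fun hc => conv_conj Ξ' Ξ Θ₁inv Θ₁ h a hΘ₁inv.2 hΘ₁inv.1 hconj2 ha hc⟩, ?_⟩
  intro φ
  constructor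
  · intro hφ
    have := limit_conj Ξ Ξ' Θ₁ Θ₁inv a h hΘ₁inv.1 hΘ₁inv.2 hconj1 hab1 pulse φ hφ
    rwa [pulse_comp Θ₁ Θ₁inv hΘ₁inv.1 hΘ₁inv.2] at this
  · intro hφ
    have := limit_conj Ξ' Ξ Θ₁inv Θ₁ h a hΘ₁inv.2 hΘ₁inv.1 hconj2 ha pulse _ hφ
    rw [pulse_comp Θ₁inv Θ₁ hΘ₁inv.2 hΘ₁inv.1] at this
    have e1 : Θ₁.map (Int.cast : ℤ → ℝ) * Θ₁inv.map Int.cast = 1 := by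
      rw [← map_mul_cast, hΘ₁inv.1]; simp
    simp only [Matrix.mulVec_mulVec, e1, Matrix.one_mulVec] at this
    exact this
end

section
/- Let Σ = diag(σ₁,…,σ_s) and suppose each univariate subdivision operator S_{σ_j,g_j^0} maps Π_k to Π_k for all k ≤ n (reproduction of degree n). Let Ξ = Θ₁ Σ Θ₂ with Θ₁, Θ₂ unimodular and b₀ = (g₁^0 ⊗ ⋯ ⊗ g_s^0)(Θ₁^{-1}·). Then S_{Ξ,b₀} maps Π_k to Π_k for all k ≤ n. -/
/-- The univariate subdivision operator `S_{σ,g} c = ∑_k g(·−σk) c(k)`. -/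
noncomputable def subdivOp1 (σ : ℤ) (g : ℤ → ℝ) (c : ℤ → ℝ) : ℤ → ℝ :=
  fun β => ∑ᶠ k : ℤ, g (β - σ * k) * c k

/-- `c : ℤ → ℝ` is the restriction of a univariate polynomial of degree ≤ k. -/
def IsPolySeq1 (k : ℕ) (c : ℤ → ℝ) : Prop :=
  ∃ p : Polynomial ℝ, p.natDegree ≤ k ∧ ∀ m : ℤ, c m = p.eval (m : ℝ)

/-- `c : ℤ^s → ℝ` is the restriction of an `s`-variate polynomial of total degree ≤ k. -/
def IsPolySeq {s : ℕ} (k : ℕ) (c : (Fin s → ℤ) → ℝ) : Prop :=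
  ∃ p : MvPolynomial (Fin s) ℝ, p.totalDegree ≤ k ∧
    ∀ α : Fin s → ℤ, c α = MvPolynomial.eval (fun i => (α i : ℝ)) p

open MvPolynomial

lemma eval_eval₂C {s : ℕ} (q : Polynomial ℝ) (j : Fin s) (v : Fin s → ℝ) :
    MvPolynomial.eval v (Polynomial.eval₂ MvPolynomial.C (MvPolynomial.X j) q) = q.eval (v j) := by
  rw [Polynomial.hom_eval₂]
  have : (MvPolynomial.eval v).comp MvPolynomial.C = RingHom.id ℝ := by
    ext x; simp
  rw [this, MvPolynomial.eval_X, Polynomial.eval]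

lemma totalDegree_eval₂C_le {s : ℕ} (q : Polynomial ℝ) (j : Fin s) :
    (Polynomial.eval₂ MvPolynomial.C (MvPolynomial.X j) q).totalDegree ≤ q.natDegree := by
  rw [Polynomial.eval₂_eq_sum, Polynomial.sum]
  refine (MvPolynomial.totalDegree_finset_sum _ _).trans (Finset.sup_le fun e he => ?_)
  calc (MvPolynomial.C (q.coeff e) * MvPolynomial.X j ^ e).totalDegree
      ≤ (MvPolynomial.C (q.coeff e)).totalDegree + (MvPolynomial.X (R := ℝ) j ^ e).totalDegree :=
        MvPolynomial.totalDegree_mul _ _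
    _ ≤ 0 + e * 1 := by
        gcongr
        · simp
        · exact (MvPolynomial.totalDegree_pow _ _).trans (by simp)
    _ ≤ q.natDegree := by simpa using Polynomial.le_natDegree_of_mem_supp e he

lemma finsupp_apply_le_sum {s : ℕ} (μ : Fin s →₀ ℕ) (j : Fin s) :
    μ j ≤ μ.sum fun _ e => e := by
  by_cases h : μ j = 0
  · simp [h]
  · exact Finset.single_le_sum (f := fun a => μ a) (fun _ _ => Nat.zero_le _)
      (Finsupp.mem_support_iff.2 h)

lemma aeval_eq_eval' {s : ℕ} (v : Fin s → ℝ) (p : MvPolynomial (Fin s) ℝ) :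
    aeval v p = eval v p := by
  rw [MvPolynomial.aeval_def, Algebra.algebraMap_self]
  rfl

lemma eval_bind₁' {s : ℕ} (g : Fin s → MvPolynomial (Fin s) ℝ) (p : MvPolynomial (Fin s) ℝ)
    (v : Fin s → ℝ) :
    eval v (bind₁ g p) = eval (fun i => eval v (g i)) p := by
  have h := MvPolynomial.aeval_bind₁ (R := ℝ) v g p
  simp only [aeval_eq_eval'] at h
  exact h

/-- Polynomial sequences are stable under composition with an integer matrix. -/
lemma isPolySeq_comp {s k : ℕ} (M : Matrix (Fin s) (Fin s) ℤ) {c : (Fin s → ℤ) → ℝ}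
    (h : IsPolySeq k c) : IsPolySeq k (fun β => c (M.mulVec β)) := by
  obtain ⟨p, hdeg, hc⟩ := h
  set lin : Fin s → MvPolynomial (Fin s) ℝ :=
    fun i => ∑ j, MvPolynomial.C ((M i j : ℝ)) * MvPolynomial.X j with hlin
  have hlindeg : ∀ i, (lin i).totalDegree ≤ 1 := by
    intro i
    refine (MvPolynomial.totalDegree_finset_sum _ _).trans (Finset.sup_le fun j _ => ?_)
    calc (MvPolynomial.C ((M i j : ℝ)) * MvPolynomial.X j).totalDegree
        ≤ (MvPolynomial.C ((M i j : ℝ))).totalDegree + (MvPolynomial.X (R := ℝ) j).totalDegree :=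
          MvPolynomial.totalDegree_mul _ _
      _ ≤ 0 + 1 := by
          gcongr
          · exact le_of_eq (MvPolynomial.totalDegree_C _)
          · exact le_of_eq (MvPolynomial.totalDegree_X _)
      _ = 1 := by ring
  refine ⟨MvPolynomial.bind₁ lin p, ?_, ?_⟩
  · conv_lhs => rw [p.as_sum, map_sum]
    refine (MvPolynomial.totalDegree_finset_sum _ _).trans (Finset.sup_le fun μ hμ => ?_)
    rw [MvPolynomial.bind₁_monomial]
    calc (MvPolynomial.C (coeff μ p) * ∏ i ∈ μ.support, lin i ^ μ i).totalDegree
        ≤ (MvPolynomial.C (coeff μ p)).totalDegree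
            + (∏ i ∈ μ.support, lin i ^ μ i).totalDegree := MvPolynomial.totalDegree_mul _ _
      _ ≤ 0 + ∑ i ∈ μ.support, μ i * 1 := by
          gcongr
          · simp
          · refine (MvPolynomial.totalDegree_finset_prod _ _).trans (Finset.sum_le_sum ?_)
            intro i _
            exact (MvPolynomial.totalDegree_pow _ _).trans
              (Nat.mul_le_mul_left _ (hlindeg i))
      _ = μ.sum fun _ e => e := by simp [Finsupp.sum]
      _ ≤ p.totalDegree := MvPolynomial.le_totalDegree hμ
      _ ≤ k := hdeg
  · intro α
    show c (M.mulVec α) = _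
    rw [hc (M.mulVec α), eval_bind₁']
    have : (fun i => ((M.mulVec α i : ℤ) : ℝ))
        = fun i => MvPolynomial.eval (fun i => ((α i : ℤ) : ℝ)) (lin i) := by
      funext i
      simp only [hlin, MvPolynomial.eval_sum, MvPolynomial.eval_mul, MvPolynomial.eval_C,
        MvPolynomial.eval_X, Matrix.mulVec, dotProduct]
      push_cast
      rfl
    rw [this]

/-- Reproduction for the diagonal tensor-product scheme. -/
lemma diag_repro {s : ℕ} (σ : Fin s → ℤ) (g : Fin s → ℤ → ℝ) (n : ℕ)
    (hσ : ∀ j, σ j ≠ 0) (hfin : ∀ j, (Function.support (g j)).Finite)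
    (hrepro : ∀ j : Fin s, ∀ k ≤ n, ∀ c : ℤ → ℝ,
      IsPolySeq1 k c → IsPolySeq1 k (subdivOp1 (σ j) (g j) c)) :
    ∀ k ≤ n, ∀ c : (Fin s → ℤ) → ℝ, IsPolySeq k c →
      IsPolySeq k (subdivOp (Matrix.diagonal σ) (fun α => ∏ j, g j (α j)) c) := by
  intro k hk c hc
  obtain ⟨p, hdeg, hcp⟩ := hc
  have key : ∀ μ ∈ p.support, ∀ j : Fin s, ∃ q : Polynomial ℝ, q.natDegree ≤ μ j ∧
      ∀ m : ℤ, subdivOp1 (σ j) (g j) (fun t : ℤ => (t : ℝ) ^ (μ j)) m = q.eval (m : ℝ) := by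
    intro μ hμ j
    have hμj : μ j ≤ n := le_trans (le_trans (finsupp_apply_le_sum μ j)
      (MvPolynomial.le_totalDegree hμ)) (le_trans hdeg hk)
    have h1 : IsPolySeq1 (μ j) (fun t : ℤ => (t : ℝ) ^ (μ j)) :=
      ⟨Polynomial.X ^ (μ j), by simp, by simp⟩
    obtain ⟨qq, hq1, hq2⟩ := hrepro j (μ j) hμj _ h1
    exact ⟨qq, hq1, fun m => hq2 m⟩
  choose q hqdeg hqeval using key
  refine ⟨∑ μ ∈ p.support.attach,
      MvPolynomial.C (MvPolynomial.coeff μ.1 p) *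
        ∏ j, Polynomial.eval₂ MvPolynomial.C (MvPolynomial.X j) (q μ.1 μ.2 j), ?_, ?_⟩
  · refine (MvPolynomial.totalDegree_finset_sum _ _).trans (Finset.sup_le fun μ _ => ?_)
    calc (MvPolynomial.C (coeff μ.1 p) *
          ∏ j, Polynomial.eval₂ MvPolynomial.C (MvPolynomial.X j) (q μ.1 μ.2 j)).totalDegree
        ≤ (MvPolynomial.C (coeff μ.1 p)).totalDegree +
          (∏ j, Polynomial.eval₂ MvPolynomial.C (MvPolynomial.X j) (q μ.1 μ.2 j)).totalDegree :=
          MvPolynomial.totalDegree_mul _ _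
      _ ≤ 0 + ∑ j, μ.1 j := by
          gcongr
          · simp
          · exact (MvPolynomial.totalDegree_finset_prod _ _).trans
              (Finset.sum_le_sum fun j _ => (totalDegree_eval₂C_le _ _).trans (hqdeg _ _ _))
      _ = μ.1.sum fun _ e => e := by
          rw [zero_add, Finsupp.sum_fintype]; intro; rfl
      _ ≤ k := le_trans (MvPolynomial.le_totalDegree μ.2) hdeg
  · intro β
    set A : Fin s → Finset ℤ := fun j => (hfin j).toFinset.image (fun t => (β j - t) / σ j)
      with hA
    have hmemA : ∀ (j : Fin s) (x : ℤ), g j (β j - σ j * x) ≠ 0 → x ∈ A j := by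
      intro j x hx
      rw [hA]
      refine Finset.mem_image.2 ⟨β j - σ j * x, (hfin j).mem_toFinset.2 hx, ?_⟩
      simp [Int.mul_ediv_cancel_left _ (hσ j)]
    have hsupp : ∀ (w : (Fin s → ℤ) → ℝ),
        Function.support (fun α : Fin s → ℤ => (∏ j, g j (β j - σ j * α j)) * w α)
          ⊆ ↑(Fintype.piFinset A) := by
      intro w α hα
      have h1 : (∏ j, g j (β j - σ j * α j)) ≠ 0 := left_ne_zero_of_mul hα
      rw [Finset.mem_coe, Fintype.mem_piFinset]
      intro j
      exact hmemA j (α j) (fun h0 => h1 (Finset.prod_eq_zero (Finset.mem_univ j) h0))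
    have hsupp1 : ∀ (j : Fin s) (f : ℤ → ℝ),
        Function.support (fun t : ℤ => g j (β j - σ j * t) * f t) ⊆ ↑(A j) := by
      intro j f t ht
      exact hmemA j t (left_ne_zero_of_mul ht)
    have hLHS : subdivOp (Matrix.diagonal σ) (fun α => ∏ j, g j (α j)) c β
        = ∑ α ∈ Fintype.piFinset A, (∏ j, g j (β j - σ j * α j)) * c α := by
      rw [subdivOp]
      have e1 : ∀ α : Fin s → ℤ,
          (∏ j, g j ((β - (Matrix.diagonal σ).mulVec α) j)) = ∏ j, g j (β j - σ j * α j) := by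
        intro α
        refine Finset.prod_congr rfl fun j _ => ?_
        rw [Pi.sub_apply, Matrix.mulVec_diagonal]
      calc (∑ᶠ α : Fin s → ℤ, (∏ j, g j ((β - (Matrix.diagonal σ).mulVec α) j)) * c α)
          = ∑ᶠ α : Fin s → ℤ, (∏ j, g j (β j - σ j * α j)) * c α :=
            finsum_congr fun α => by rw [e1 α]
        _ = ∑ α ∈ Fintype.piFinset A, (∏ j, g j (β j - σ j * α j)) * c α :=
            finsum_eq_sum_of_support_subset _ (hsupp c)
    rw [hLHS]
    calc (∑ α ∈ Fintype.piFinset A, (∏ j, g j (β j - σ j * α j)) * c α)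
        = ∑ α ∈ Fintype.piFinset A, ∑ μ ∈ p.support.attach,
            MvPolynomial.coeff μ.1 p *
              ∏ j, (g j (β j - σ j * α j) * (α j : ℝ) ^ (μ.1 j)) := by
          refine Finset.sum_congr rfl fun α _ => ?_
          rw [hcp α, MvPolynomial.eval_eq',
            ← Finset.sum_attach p.support
              (fun μ => MvPolynomial.coeff μ p * ∏ i, ((α i : ℝ)) ^ (μ i)),
            Finset.mul_sum]
          refine Finset.sum_congr rfl fun μ _ => ?_
          rw [Finset.prod_mul_distrib]
          ring
      _ = ∑ μ ∈ p.support.attach, MvPolynomial.coeff μ.1 p *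
            ∏ j, ∑ t ∈ A j, g j (β j - σ j * t) * (t : ℝ) ^ (μ.1 j) := by
          rw [Finset.sum_comm]
          refine Finset.sum_congr rfl fun μ _ => ?_
          rw [← Finset.mul_sum, Finset.prod_univ_sum]
      _ = ∑ μ ∈ p.support.attach, MvPolynomial.coeff μ.1 p *
            ∏ j, (q μ.1 μ.2 j).eval ((β j : ℝ)) := by
          refine Finset.sum_congr rfl fun μ _ => ?_
          congr 1
          refine Finset.prod_congr rfl fun j _ => ?_
          rw [← hqeval μ.1 μ.2 j (β j), subdivOp1]
          exact (finsum_eq_sum_of_support_subset _ (hsupp1 j _)).symm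
      _ = MvPolynomial.eval (fun i => (β i : ℝ))
            (∑ μ ∈ p.support.attach, MvPolynomial.C (MvPolynomial.coeff μ.1 p) *
              ∏ j, Polynomial.eval₂ MvPolynomial.C (MvPolynomial.X j) (q μ.1 μ.2 j)) := by
          rw [map_sum]
          refine Finset.sum_congr rfl fun μ _ => ?_
          rw [map_mul, MvPolynomial.eval_C, map_prod]
          congr 1
          exact Finset.prod_congr rfl fun j _ =>
            (eval_eval₂C (q μ.1 μ.2 j) j (fun i => ((β i : ℤ) : ℝ))).symm

/-- If each univariate scheme `S_{σ_j,g_j^0}` reproduces polynomials of degree `n`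
(maps `Π_k` into `Π_k` for all `k ≤ n`), then so does `S_{Ξ,b₀}` with
`Ξ = Θ₁ Σ Θ₂` and `b₀ = (g₁^0 ⊗ ⋯ ⊗ g_s^0)(Θ₁^{-1}·)`; hence the filterbank
has vanishing moments of degree `n`. -/
theorem tensor_subdivision_polynomial_reproduction
    {s : ℕ} (Ξ Θ₁ Θ₂ Θ₁inv : Matrix (Fin s) (Fin s) ℤ)
    (σ : Fin s → ℤ) (g : Fin s → ℤ → ℝ) (n : ℕ)
    (hσ : ∀ j, σ j ≠ 0)
    (hSmith : Ξ = Θ₁ * Matrix.diagonal σ * Θ₂)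
    (hΘ₁ : |Θ₁.det| = 1) (hΘ₂ : |Θ₂.det| = 1)
    (hΘ₁inv : Θ₁ * Θ₁inv = 1 ∧ Θ₁inv * Θ₁ = 1)
    (hfin : ∀ j, (Function.support (g j)).Finite)
    -- each univariate scheme provides reproduction of degree n
    (hrepro : ∀ j : Fin s, ∀ k ≤ n, ∀ c : ℤ → ℝ,
      IsPolySeq1 k c → IsPolySeq1 k (subdivOp1 (σ j) (g j) c))
    (b₀ : (Fin s → ℤ) → ℝ)
    (hb₀ : ∀ α : Fin s → ℤ, b₀ α = ∏ j : Fin s, g j (Θ₁inv.mulVec α j)) :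
    ∀ k ≤ n, ∀ c : (Fin s → ℤ) → ℝ,
      IsPolySeq k c → IsPolySeq k (subdivOp Ξ b₀ c) := by
  intro k hk c hc
  -- integer inverse of Θ₂
  have hdet : IsUnit Θ₂.det := Int.isUnit_iff.2 ((abs_eq (by norm_num : (0:ℤ) ≤ 1)).1 hΘ₂)
  have : Invertible Θ₂ := Θ₂.invertibleOfIsUnitDet hdet
  set Θ₂inv : Matrix (Fin s) (Fin s) ℤ := ⅟Θ₂ with hΘ₂inv
  have h2a : Θ₂ * Θ₂inv = 1 := mul_invOf_self Θ₂
  have h2b : Θ₂inv * Θ₂ = 1 := invOf_mul_self Θ₂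
  -- change of variables
  let e : (Fin s → ℤ) ≃ (Fin s → ℤ) :=
    { toFun := Θ₂inv.mulVec
      invFun := Θ₂.mulVec
      left_inv := fun γ => by
        rw [Matrix.mulVec_mulVec, h2a, Matrix.one_mulVec]
      right_inv := fun γ => by
        rw [Matrix.mulVec_mulVec, h2b, Matrix.one_mulVec] }
  have key : ∀ β : Fin s → ℤ, subdivOp Ξ b₀ c β
      = subdivOp (Matrix.diagonal σ) (fun α => ∏ j, g j (α j))
          (fun γ => c (Θ₂inv.mulVec γ)) (Θ₁inv.mulVec β) := by
    intro β
    rw [subdivOp, subdivOp]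
    rw [← finsum_comp_equiv e (f := fun α => b₀ (β - Ξ.mulVec α) * c α)]
    refine finsum_congr fun γ => ?_
    have hXiv : Ξ.mulVec (Θ₂inv.mulVec γ) = Θ₁.mulVec ((Matrix.diagonal σ).mulVec γ) := by
      rw [Matrix.mulVec_mulVec, hSmith, mul_assoc, h2a, mul_one, ← Matrix.mulVec_mulVec]
    have harg : Θ₁inv.mulVec (β - Ξ.mulVec (Θ₂inv.mulVec γ))
        = Θ₁inv.mulVec β - (Matrix.diagonal σ).mulVec γ := by
      rw [hXiv, Matrix.mulVec_sub, Matrix.mulVec_mulVec, hΘ₁inv.2, Matrix.one_mulVec]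
    show b₀ (β - Ξ.mulVec (Θ₂inv.mulVec γ)) * c (Θ₂inv.mulVec γ) = _
    rw [hb₀, harg]
  have hc2 : IsPolySeq k (fun γ => c (Θ₂inv.mulVec γ)) := isPolySeq_comp Θ₂inv hc
  have hd : IsPolySeq k (subdivOp (Matrix.diagonal σ) (fun α => ∏ j, g j (α j))
      (fun γ => c (Θ₂inv.mulVec γ))) :=
    diag_repro σ g n hσ hfin hrepro k hk _ hc2
  have hfinal : IsPolySeq k (fun β => subdivOp (Matrix.diagonal σ) (fun α => ∏ j, g j (α j))
      (fun γ => c (Θ₂inv.mulVec γ)) (Θ₁inv.mulVec β)) := isPolySeq_comp Θ₁inv hd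
  obtain ⟨p, h1, h2⟩ := hfinal
  exact ⟨p, h1, fun α => by rw [key α]; exact h2 α⟩
end

section
/- With Ξ_j as above (j ∈ ℤ_s) and Ξ_ε := Ξ_{ε_n} ⋯ Ξ_{ε_1} for ε ∈ ℤ_s^n, one has Ξ_ε^{-1} = [[σ₁^{-n} I, σ₂^{-n} p_ε(σ₂/σ₁)],[0, σ₂^{-n}]] where p_ε(x) = (1−x) ∑_{k=1}^n x^{k−1} e_{ε_k}, and equivalently Ξ_ε = [[σ₁^n I, −σ₁^n p_ε(σ₂/σ₁)],[0, σ₂^n]]. -/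
/-! Codimension-1 shears and anisotropic dilations in dimension `s = m + 1`.
The index set for the digits is `Fin (m+1) = ℤ_s`; the digit `0` corresponds to
`e₀ = 0` (no shear), and the digit `j+1` corresponds to the canonical unit
vector `e_{j+1}` of `ℝ^{s-1} = ℝ^m`, which has its `1` in position `j`. -/

/-- The vector `e_j ∈ ℝ^{s-1}` (`e₀ = 0`). -/
def unitE (m : ℕ) (j : Fin (m + 1)) : Fin m → ℝ :=
  fun i => if (i : ℕ) + 1 = (j : ℕ) then 1 else 0

/-- The shear `Γ_j = [[I_{s−1}, −e_j],[0,1]]` (so `Γ₀ = I`). -/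
def shearGamma (m : ℕ) (j : Fin (m + 1)) :
    Matrix (Fin (m + 1)) (Fin (m + 1)) ℝ :=
  fun i k =>
    if (i : ℕ) < m then
      if (k : ℕ) < m then (if i = k then 1 else 0)
      else -(if (i : ℕ) + 1 = (j : ℕ) then 1 else 0)
    else (if k = i then 1 else 0)

/-- The diagonal dilation `Ξ₀ = diag(σ₁ I_{s-1}, σ₂)`. -/
def xiZero (m : ℕ) (σ₁ σ₂ : ℝ) : Matrix (Fin (m + 1)) (Fin (m + 1)) ℝ :=
  Matrix.diagonal (fun i => if (i : ℕ) < m then σ₁ else σ₂)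

/-- The sheared dilation `Ξ_j = [[σ₁ I_{s−1}, (σ₂ − σ₁)e_j],[0, σ₂]]`. -/
def xiMat (m : ℕ) (σ₁ σ₂ : ℝ) (j : Fin (m + 1)) :
    Matrix (Fin (m + 1)) (Fin (m + 1)) ℝ :=
  fun i k =>
    if (i : ℕ) < m then
      if (k : ℕ) < m then (if i = k then σ₁ else 0)
      else (σ₂ - σ₁) * (if (i : ℕ) + 1 = (j : ℕ) then 1 else 0)
    else (if k = i then σ₂ else 0)

/-- `[[σ₁^{-1} I_{s−1}, ((σ₁−σ₂)/(σ₁σ₂)) e_j],[0, σ₂^{-1}]]`, the claimed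
inverse of `Ξ_j`. -/
noncomputable def xiInvMat (m : ℕ) (σ₁ σ₂ : ℝ) (j : Fin (m + 1)) :
    Matrix (Fin (m + 1)) (Fin (m + 1)) ℝ :=
  fun i k =>
    if (i : ℕ) < m then
      if (k : ℕ) < m then (if i = k then σ₁⁻¹ else 0)
      else ((σ₁ - σ₂) / (σ₁ * σ₂)) * (if (i : ℕ) + 1 = (j : ℕ) then 1 else 0)
    else (if k = i then σ₂⁻¹ else 0)

/-- The product `Ξ_ε = Ξ_{ε_n} ⋯ Ξ_{ε_1}` for a digit sequence `ε ∈ ℤ_s^n`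
(here `ε t` corresponds to `ε_{t+1}`, so the factor for `ε 0` is applied first,
i.e. stands rightmost). -/
noncomputable def xiProd (m : ℕ) (σ₁ σ₂ : ℝ) {n : ℕ} (ε : Fin n → Fin (m + 1)) :
    Matrix (Fin (m + 1)) (Fin (m + 1)) ℝ :=
  ((List.ofFn fun t => xiMat m σ₁ σ₂ (ε t)).reverse).prod

/-- The vector `p_ε(x) = (1−x) ∑_{k=1}^n x^{k−1} e_{ε_k}`, evaluated at
`x = σ₂/σ₁`. -/
noncomputable def pEps (m : ℕ) (σ₁ σ₂ : ℝ) {n : ℕ} (ε : Fin n → Fin (m + 1)) :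
    Fin m → ℝ :=
  fun i => (1 - σ₂ / σ₁) *
    ∑ t : Fin n, (σ₂ / σ₁) ^ (t : ℕ) * (if (i : ℕ) + 1 = (ε t : ℕ) then 1 else 0)

/-- The explicit form `[[σ₁^n I, −σ₁^n p_ε(σ₂/σ₁)],[0, σ₂^n]]` of `Ξ_ε`. -/
noncomputable def xiEpsMat (m : ℕ) (σ₁ σ₂ : ℝ) {n : ℕ} (ε : Fin n → Fin (m + 1)) :
    Matrix (Fin (m + 1)) (Fin (m + 1)) ℝ :=
  fun i k =>
    if hi : (i : ℕ) < m then
      if (k : ℕ) < m then (if i = k then σ₁ ^ n else 0)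
      else -σ₁ ^ n * pEps m σ₁ σ₂ ε ⟨i, hi⟩
    else (if k = i then σ₂ ^ n else 0)

/-- The explicit form `[[σ₁^{-n} I, σ₂^{-n} p_ε(σ₂/σ₁)],[0, σ₂^{-n}]]` of
`Ξ_ε^{-1}`. -/
noncomputable def xiEpsInvMat (m : ℕ) (σ₁ σ₂ : ℝ) {n : ℕ}
    (ε : Fin n → Fin (m + 1)) : Matrix (Fin (m + 1)) (Fin (m + 1)) ℝ :=
  fun i k =>
    if hi : (i : ℕ) < m then
      if (k : ℕ) < m then (if i = k then (σ₁⁻¹) ^ n else 0)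
      else (σ₂⁻¹) ^ n * pEps m σ₁ σ₂ ε ⟨i, hi⟩
    else (if k = i then (σ₂⁻¹) ^ n else 0)

/-! Every matrix involved has the block shape `[[a I, b],[0, d]]` with scalar diagonal blocks,
and such matrices multiply by `(a, b, d)(a', b', d') = (a a', a b' + d' b, d d')`. Peeling off the
rightmost factor `Ξ_{ε_1}` therefore turns the claim for `Ξ_ε` into the recurrence
`p_ε = (1 - x) e_{ε_1} + x p_{ε'}` for the shifted word `ε'`, and the inverse is read off the
block form directly. -/

section BlockUpper

variable {R : Type*} [Semiring R] {m : ℕ}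

/-- The block matrix `[[a I_m, b],[0, d]]` of size `m + 1`. -/
def blockUpper (m : ℕ) (a : R) (b : Fin m → R) (d : R) : Matrix (Fin (m + 1)) (Fin (m + 1)) R :=
  fun i k =>
    if hi : (i : ℕ) < m then
      if (k : ℕ) < m then (if i = k then a else 0)
      else b ⟨i, hi⟩
    else (if k = i then d else 0)

@[simp]
lemma blockUpper_castSucc_castSucc (a d : R) (b : Fin m → R) (i k : Fin m) :
    blockUpper m a b d i.castSucc k.castSucc = if i = k then a else 0 := by
  simp [blockUpper]

@[simp]
lemma blockUpper_castSucc_last (a d : R) (b : Fin m → R) (i : Fin m) :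
    blockUpper m a b d i.castSucc (Fin.last m) = b i := by
  simp [blockUpper]

@[simp]
lemma blockUpper_last_castSucc (a d : R) (b : Fin m → R) (k : Fin m) :
    blockUpper m a b d (Fin.last m) k.castSucc = 0 := by
  simp [blockUpper, Fin.ext_iff, k.isLt.ne]

@[simp]
lemma blockUpper_last_last (a d : R) (b : Fin m → R) :
    blockUpper m a b d (Fin.last m) (Fin.last m) = d := by
  simp [blockUpper]

lemma blockUpper_ext {M : Matrix (Fin (m + 1)) (Fin (m + 1)) R} {a d : R} {b : Fin m → R}
    (h₁ : ∀ i k : Fin m, M i.castSucc k.castSucc = if i = k then a else 0)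
    (h₂ : ∀ i : Fin m, M i.castSucc (Fin.last m) = b i)
    (h₃ : ∀ k : Fin m, M (Fin.last m) k.castSucc = 0)
    (h₄ : M (Fin.last m) (Fin.last m) = d) :
    M = blockUpper m a b d := by
  ext i k
  induction i using Fin.lastCases <;> induction k using Fin.lastCases <;> simp [*]

lemma blockUpper_mul (a d a' d' : R) (b b' : Fin m → R) :
    blockUpper m a b d * blockUpper m a' b' d' =
      blockUpper m (a * a') (fun i => a * b' i + b i * d') (d * d') := by
  refine blockUpper_ext ?_ ?_ ?_ ?_ <;> intros <;>
    simp [Matrix.mul_apply, Fin.sum_univ_castSucc, ite_mul]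

lemma one_eq_blockUpper : (1 : Matrix (Fin (m + 1)) (Fin (m + 1)) R) = blockUpper m 1 0 1 := by
  refine blockUpper_ext (fun i k => ?_) (fun i => ?_) (fun k => ?_) ?_ <;>
    simp [Matrix.one_apply, Fin.ext_iff, Nat.ne_of_lt, Nat.ne_of_gt]

end BlockUpper

lemma xiMat_eq_blockUpper (m : ℕ) (σ₁ σ₂ : ℝ) (j : Fin (m + 1)) :
    xiMat m σ₁ σ₂ j = blockUpper m σ₁ (fun i => (σ₂ - σ₁) * unitE m j i) σ₂ := by
  ext i k
  by_cases hi : (i : ℕ) < m <;> simp [xiMat, blockUpper, unitE, hi]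

lemma xiEpsMat_eq_blockUpper (m : ℕ) (σ₁ σ₂ : ℝ) {n : ℕ} (ε : Fin n → Fin (m + 1)) :
    xiEpsMat m σ₁ σ₂ ε = blockUpper m (σ₁ ^ n) (fun i => -σ₁ ^ n * pEps m σ₁ σ₂ ε i) (σ₂ ^ n) :=
  rfl

lemma xiEpsInvMat_eq_blockUpper (m : ℕ) (σ₁ σ₂ : ℝ) {n : ℕ} (ε : Fin n → Fin (m + 1)) :
    xiEpsInvMat m σ₁ σ₂ ε =
      blockUpper m (σ₁⁻¹ ^ n) (fun i => σ₂⁻¹ ^ n * pEps m σ₁ σ₂ ε i) (σ₂⁻¹ ^ n) :=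
  rfl

lemma xiProd_zero (m : ℕ) (σ₁ σ₂ : ℝ) (ε : Fin 0 → Fin (m + 1)) : xiProd m σ₁ σ₂ ε = 1 := by
  simp [xiProd]

lemma xiProd_succ (m : ℕ) (σ₁ σ₂ : ℝ) {n : ℕ} (ε : Fin (n + 1) → Fin (m + 1)) :
    xiProd m σ₁ σ₂ ε = xiProd m σ₁ σ₂ (Fin.tail ε) * xiMat m σ₁ σ₂ (ε 0) := by
  rw [xiProd, List.ofFn_succ, List.reverse_cons, List.prod_append, List.prod_singleton]
  rfl

lemma pEps_zero (m : ℕ) (σ₁ σ₂ : ℝ) (ε : Fin 0 → Fin (m + 1)) : pEps m σ₁ σ₂ ε = 0 := by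
  ext i
  simp [pEps]

lemma pEps_succ (m : ℕ) (σ₁ σ₂ : ℝ) {n : ℕ} (ε : Fin (n + 1) → Fin (m + 1)) (i : Fin m) :
    pEps m σ₁ σ₂ ε i =
      (1 - σ₂ / σ₁) * unitE m (ε 0) i + σ₂ / σ₁ * pEps m σ₁ σ₂ (Fin.tail ε) i := by
  simp only [pEps, unitE, Fin.sum_univ_succ, Fin.val_zero, pow_zero, one_mul, Fin.val_succ,
    pow_succ, Fin.tail, mul_add, Finset.mul_sum]
  congr 1
  exact Finset.sum_congr rfl fun _ _ => by ac_rfl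

theorem xiProd_eq_xiEpsMat (m : ℕ) {σ₁ : ℝ} (σ₂ : ℝ) (hσ₁ : σ₁ ≠ 0) {n : ℕ}
    (ε : Fin n → Fin (m + 1)) : xiProd m σ₁ σ₂ ε = xiEpsMat m σ₁ σ₂ ε := by
  induction n with
  | zero =>
    rw [xiProd_zero, xiEpsMat_eq_blockUpper, pEps_zero, one_eq_blockUpper]
    simp [Pi.zero_def]
  | succ n ih =>
    rw [xiProd_succ, ih, xiEpsMat_eq_blockUpper, xiEpsMat_eq_blockUpper, xiMat_eq_blockUpper,
      blockUpper_mul]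
    congr 1
    ext i
    rw [pEps_succ]
    field_simp
    ring

lemma xiEpsMat_mul_xiEpsInvMat (m : ℕ) {σ₁ σ₂ : ℝ} (hσ₁ : σ₁ ≠ 0) (hσ₂ : σ₂ ≠ 0) {n : ℕ}
    (ε : Fin n → Fin (m + 1)) : xiEpsMat m σ₁ σ₂ ε * xiEpsInvMat m σ₁ σ₂ ε = 1 := by
  rw [xiEpsMat_eq_blockUpper, xiEpsInvMat_eq_blockUpper, blockUpper_mul, one_eq_blockUpper,
    ← mul_pow, ← mul_pow, mul_inv_cancel₀ hσ₁, mul_inv_cancel₀ hσ₂, one_pow]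
  congr 1
  ext i
  simp only [Pi.zero_apply]
  ring

theorem xiProd_explicit_general
    (m : ℕ) (σ₁ σ₂ : ℤ) (h₁ : σ₂ < σ₁) (h₂ : 1 < σ₂)
    (n : ℕ) (ε : Fin n → Fin (m + 1)) :
    xiProd m (σ₁ : ℝ) (σ₂ : ℝ) ε = xiEpsMat m (σ₁ : ℝ) (σ₂ : ℝ) ε ∧
    (xiProd m (σ₁ : ℝ) (σ₂ : ℝ) ε)⁻¹ = xiEpsInvMat m (σ₁ : ℝ) (σ₂ : ℝ) ε := by
  have hσ₁ : (σ₁ : ℝ) ≠ 0 := by exact_mod_cast (by omega : σ₁ ≠ 0)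
  have hσ₂ : (σ₂ : ℝ) ≠ 0 := by exact_mod_cast (by omega : σ₂ ≠ 0)
  have hprod := xiProd_eq_xiEpsMat m (σ₂ : ℝ) hσ₁ ε
  exact ⟨hprod, hprod ▸ Matrix.inv_eq_right_inv (xiEpsMat_mul_xiEpsInvMat m hσ₁ hσ₂ ε)⟩

/-- Explicit formula for `Ξ_ε = Ξ_{ε_n} ⋯ Ξ_{ε_1}` and its inverse:
`Ξ_ε^{-1} = [[σ₁^{-n} I, σ₂^{-n} p_ε(σ₂/σ₁)],[0, σ₂^{-n}]]` with
`p_ε(x) = (1−x) ∑_{k=1}^n x^{k−1} e_{ε_k}`, and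
`Ξ_ε = [[σ₁^n I, −σ₁^n p_ε(σ₂/σ₁)],[0, σ₂^n]]`. -/
theorem xiProd_explicit
    (m : ℕ) (hm : 1 ≤ m) (σ₁ σ₂ : ℤ) (h₁ : σ₂ < σ₁) (h₂ : 1 < σ₂)
    (n : ℕ) (ε : Fin n → Fin (m + 1)) :
    xiProd m (σ₁ : ℝ) (σ₂ : ℝ) ε = xiEpsMat m (σ₁ : ℝ) (σ₂ : ℝ) ε ∧
    (xiProd m (σ₁ : ℝ) (σ₂ : ℝ) ε)⁻¹ = xiEpsInvMat m (σ₁ : ℝ) (σ₂ : ℝ) ε :=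
  xiProd_explicit_general m σ₁ σ₂ h₁ h₂ n ε
end
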